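/- arXiv:2411.06568 — 3 statements merged into one kernel-verified Lean document; each statement's English description precedes it below -/
import Mathlib

section
/- Let ψ : ℝ → ℝ be continuous and strictly monotone increasing on (0, ∞), with ψ(x) → −∞ as x → 0⁺, and interval integrable on [0, 1]. Define H(p) = ∫_1^p ψ(t) dt for p ≥ 0, and for a nonempty finite set 𝒯, D(x, y) = Σ_τ [H(x_τ) − H(y_τ) − ψ(y_τ)(x_τ − y_τ)]. Let r : 𝒯 → ℝ, β > 0, and π_ref ∈ Δ(𝒯) with π_ref(τ) > 0 for all τ. Suppose π* ∈ Δ(𝒯) maximizes f(π) = Σ_τ π_τ r(τ) − β D(π, π_ref) over Δ(𝒯) and additionally satisfies π*(τ) > 0 for all τ. Then the function τ ↦ r(τ) − β ψ(π*(τ)) + β ψ(π_ref(τ)) is constant on 𝒯, i.e., there exists c ∈ ℝ such that r(τ) = β (ψ(π*(τ)) − ψ(π_ref(τ))) + c for all τ. -/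
/-!
Perturbing a full-support maximizer along `e_a - e_b` stays inside the simplex for small `ε`, so
the one-variable restriction of the objective has a local maximum at `0`. The objective is a sum
of per-coordinate functions whose derivative at `p > 0` is `r τ - β (ψ p - ψ (π_ref τ))`, by the
fundamental theorem of calculus for `H`, and the vanishing derivative of the restriction says
that these per-coordinate derivatives at `π*` agree for `a` and `b`.
-/

open Filter Set Topology

theorem hasDerivAt_of_eq_intervalIntegral_of_continuousOn_Ioi {ψ H : ℝ → ℝ} {a p : ℝ}
    (hψ : ContinuousOn ψ (Ioi 0)) (hH : ∀ q, 0 < q → H q = ∫ t in a..q, ψ t)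
    (ha : 0 < a) (hp : 0 < p) : HasDerivAt H (ψ p) p := by
  have hsub : uIcc a p ⊆ Ioi 0 := fun t ht => lt_of_lt_of_le (lt_min ha hp) ht.1
  have hint : HasDerivAt (fun q => ∫ t in a..q, ψ t) (ψ p) p :=
    intervalIntegral.integral_hasDerivAt_right ((hψ.mono hsub).intervalIntegrable)
      (hψ.stronglyMeasurableAtFilter isOpen_Ioi p hp) (hψ.continuousAt (Ioi_mem_nhds hp))
  refine hint.congr_of_eventuallyEq ?_
  filter_upwards [Ioi_mem_nhds hp] with q hq using hH q hq

theorem eventually_forall_pos_add_mul {ι : Type*} [Finite ι] {x : ι → ℝ} (hx : ∀ i, 0 < x i)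
    (d : ι → ℝ) : ∀ᶠ ε in 𝓝 (0 : ℝ), ∀ i, 0 < x i + ε * d i := by
  refine eventually_all.2 fun i => ?_
  have hcont : Continuous fun ε : ℝ => x i + ε * d i := by fun_prop
  exact hcont.tendsto' 0 (x i) (by simp) |>.eventually (lt_mem_nhds (hx i))

theorem hasDerivAt_eq_of_isMaxOn_stdSimplex {ι : Type*} [Fintype ι] [DecidableEq ι]
    {g : ι → ℝ → ℝ} {g' : ι → ℝ} {x : ι → ℝ} (hx : ∀ i, 0 < x i) (hsum : ∑ i, x i = 1)
    (hg : ∀ i, HasDerivAt (g i) (g' i) (x i))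
    (hmax : IsMaxOn (fun π => ∑ i, g i (π i)) (stdSimplex ℝ ι) x) (a b : ι) :
    g' a = g' b := by
  set d : ι → ℝ := Pi.single a 1 - Pi.single b 1
  set φ : ℝ → ℝ := fun ε => ∑ i, g i (x i + ε * d i)
  have hφ' : HasDerivAt φ (∑ i, g' i * d i) 0 := by
    refine HasDerivAt.fun_sum fun i _ => ?_
    have hline : HasDerivAt (fun ε : ℝ => x i + ε * d i) (d i) 0 := by
      simpa using ((hasDerivAt_id (0 : ℝ)).mul_const (d i)).const_add (x i)
    exact (hg i).comp_of_eq 0 hline (by simp)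
  have hφmax : IsLocalMax φ 0 := by
    filter_upwards [eventually_forall_pos_add_mul hx d] with ε hε
    refine (hmax ⟨fun i => (hε i).le, ?_⟩ : _ ≤ _).trans_eq (by simp [φ])
    simp [Finset.sum_add_distrib, ← Finset.mul_sum, d, hsum]
  have hstationary := hφmax.hasDerivAt_eq_zero hφ'
  simp only [d, Pi.sub_apply, Pi.single_apply, mul_sub, Finset.sum_sub_distrib, mul_ite,
    mul_one, mul_zero, Finset.sum_ite_eq', Finset.mem_univ, if_true] at hstationary
  linarith

theorem interior_stationarity_reward_identity_general
    {𝒯 : Type*} [Fintype 𝒯] [Nonempty 𝒯]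
    (ψ : ℝ → ℝ)
    (hψcont : ContinuousOn ψ (Set.Ioi (0 : ℝ)))
    (H : ℝ → ℝ) (hH : ∀ p : ℝ, 0 ≤ p → H p = ∫ t in (1 : ℝ)..p, ψ t)
    (D : (𝒯 → ℝ) → (𝒯 → ℝ) → ℝ)
    (hD : ∀ x y : 𝒯 → ℝ, D x y = ∑ τ, (H (x τ) - H (y τ) - ψ (y τ) * (x τ - y τ)))
    (r : 𝒯 → ℝ) (β : ℝ)
    (πref : 𝒯 → ℝ)
    (f : (𝒯 → ℝ) → ℝ)
    (hf : ∀ π : 𝒯 → ℝ, f π = ∑ τ, π τ * r τ - β * D π πref)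
    (πstar : 𝒯 → ℝ) (hstar_sum : ∑ τ, πstar τ = 1)
    (hstar_pos : ∀ τ, 0 < πstar τ)
    (hmax : ∀ π : 𝒯 → ℝ, (∀ τ, 0 ≤ π τ) → (∑ τ, π τ = 1) → f π ≤ f πstar) :
    ∃ c : ℝ, ∀ τ, r τ = β * (ψ (πstar τ) - ψ (πref τ)) + c := by
  classical
  set g : 𝒯 → ℝ → ℝ := fun τ p =>
    p * r τ - β * (H p - H (πref τ) - ψ (πref τ) * (p - πref τ))
  have hfg : f = fun π => ∑ τ, g τ (π τ) := by
    ext π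
    rw [hf, hD, Finset.mul_sum, ← Finset.sum_sub_distrib]
  have hg : ∀ τ, HasDerivAt (g τ) (r τ - β * (ψ (πstar τ) - ψ (πref τ))) (πstar τ) := by
    intro τ
    have hH' := hasDerivAt_of_eq_intervalIntegral_of_continuousOn_Ioi hψcont
      (fun q hq => hH q hq.le) one_pos (hstar_pos τ)
    have hid := hasDerivAt_id' (πstar τ)
    exact ((hid.mul_const (r τ)).fun_sub (((hH'.sub_const (H (πref τ))).fun_sub
      ((hid.sub_const (πref τ)).const_mul (ψ (πref τ)))).const_mul β)).congr_deriv (by ring)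
  have hmaxOn : IsMaxOn f (stdSimplex ℝ 𝒯) πstar := fun π hπ => hmax π hπ.1 hπ.2
  rw [hfg] at hmaxOn
  obtain ⟨τ₀⟩ := ‹Nonempty 𝒯›
  refine ⟨r τ₀ - β * (ψ (πstar τ₀) - ψ (πref τ₀)), fun τ => ?_⟩
  have := hasDerivAt_eq_of_isMaxOn_stdSimplex hstar_pos hstar_sum hg hmaxOn τ τ₀
  linarith

/-- Interior first-order (KKT stationarity) step: if π* ∈ Δ(𝒯) maximizes
f(π) = Σ_τ π_τ r(τ) − β D(π, π_ref) over Δ(𝒯) and has full support, then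
τ ↦ r(τ) − β ψ(π*(τ)) + β ψ(π_ref(τ)) is constant, i.e. there exists c ∈ ℝ with
r(τ) = β (ψ(π*(τ)) − ψ(π_ref(τ))) + c for all τ. -/
theorem interior_stationarity_reward_identity
    {𝒯 : Type*} [Fintype 𝒯] [Nonempty 𝒯]
    (ψ : ℝ → ℝ)
    (hψcont : ContinuousOn ψ (Set.Ioi (0 : ℝ)))
    (hψmono : StrictMonoOn ψ (Set.Ioi (0 : ℝ)))
    (hψtend : Filter.Tendsto ψ (nhdsWithin 0 (Set.Ioi (0 : ℝ))) Filter.atBot)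
    (hψint : IntervalIntegrable ψ MeasureTheory.volume 0 1)
    (H : ℝ → ℝ) (hH : ∀ p : ℝ, 0 ≤ p → H p = ∫ t in (1 : ℝ)..p, ψ t)
    (D : (𝒯 → ℝ) → (𝒯 → ℝ) → ℝ)
    (hD : ∀ x y : 𝒯 → ℝ, D x y = ∑ τ, (H (x τ) - H (y τ) - ψ (y τ) * (x τ - y τ)))
    (r : 𝒯 → ℝ) (β : ℝ) (hβ : 0 < β)
    (πref : 𝒯 → ℝ) (hrefpos : ∀ τ, 0 < πref τ) (hrefsum : ∑ τ, πref τ = 1)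
    (f : (𝒯 → ℝ) → ℝ)
    (hf : ∀ π : 𝒯 → ℝ, f π = ∑ τ, π τ * r τ - β * D π πref)
    (πstar : 𝒯 → ℝ) (hstar_nonneg : ∀ τ, 0 ≤ πstar τ) (hstar_sum : ∑ τ, πstar τ = 1)
    (hstar_pos : ∀ τ, 0 < πstar τ)
    (hmax : ∀ π : 𝒯 → ℝ, (∀ τ, 0 ≤ π τ) → (∑ τ, π τ = 1) → f π ≤ f πstar) :
    ∃ c : ℝ, ∀ τ, r τ = β * (ψ (πstar τ) - ψ (πref τ)) + c :=
  interior_stationarity_reward_identity_general ψ hψcont H hH D hD r β πref f hf πstar hstar_sum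
    hstar_pos hmax
end

section
/- Let ψ : ℝ → ℝ be continuous and strictly monotone increasing on (0, ∞), with ψ(x) → −∞ as x → 0⁺, and interval integrable on [0, 1]. Define H(p) = ∫_1^p ψ(t) dt for p ≥ 0, and for a nonempty finite set 𝒯, D(x, y) = Σ_τ [H(x_τ) − H(y_τ) − ψ(y_τ)(x_τ − y_τ)]. Let r : 𝒯 → ℝ, β > 0, and π_ref ∈ Δ(𝒯) with π_ref(τ) > 0 for all τ. Then every maximizer π* of f(π) = Σ_τ π_τ r(τ) − β D(π, π_ref) over Δ(𝒯) has full support: π*(τ) > 0 for all τ ∈ 𝒯. -/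
open MeasureTheory Set Filter

private lemma integ_sub' (ψ : ℝ → ℝ) (hψint : IntervalIntegrable ψ MeasureTheory.volume 0 1)
    {a b : ℝ} (ha : 0 ≤ a) (hb : b ≤ 1) (hab : a ≤ b) :
    IntervalIntegrable ψ MeasureTheory.volume a b :=
  hψint.mono_set (by
    rw [uIcc_of_le hab, uIcc_of_le (by norm_num : (0:ℝ) ≤ 1)]
    exact Icc_subset_Icc ha hb)

private lemma int_le' (ψ : ℝ → ℝ) (hψmono : StrictMonoOn ψ (Set.Ioi (0:ℝ)))
    (hψint : IntervalIntegrable ψ MeasureTheory.volume 0 1)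
    {a b : ℝ} (ha : 0 ≤ a) (hab : a < b) (hb : b ≤ 1) :
    ∫ t in a..b, ψ t ≤ (b - a) * ψ b := by
  have hint := integ_sub' ψ hψint ha hb hab.le
  have hconst : IntervalIntegrable (fun _ => ψ b) MeasureTheory.volume a b :=
    intervalIntegrable_const
  have hb0 : 0 < b := lt_of_le_of_lt ha hab
  have hne : ∀ᵐ t : ℝ ∂(MeasureTheory.volume.restrict (Icc a b)), t ≠ 0 := by
    refine ae_restrict_of_ae ?_
    have : MeasureTheory.volume ({0} : Set ℝ) = 0 := Real.volume_singleton
    rw [MeasureTheory.ae_iff]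
    simpa using this
  have hmem : ∀ᵐ t : ℝ ∂(MeasureTheory.volume.restrict (Icc a b)), t ∈ Icc a b :=
    MeasureTheory.ae_restrict_mem measurableSet_Icc
  have hle : (fun t => ψ t) ≤ᵐ[MeasureTheory.volume.restrict (Icc a b)] fun _ => ψ b := by
    filter_upwards [hne, hmem] with t ht htm
    have ht0 : 0 < t := lt_of_le_of_ne (le_trans ha htm.1) (Ne.symm ht)
    exact hψmono.monotoneOn ht0 hb0 htm.2
  have h := intervalIntegral.integral_mono_ae_restrict hab.le hint hconst hle
  simpa using h

private lemma int_ge' (ψ : ℝ → ℝ) (hψmono : StrictMonoOn ψ (Set.Ioi (0:ℝ)))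
    (hψint : IntervalIntegrable ψ MeasureTheory.volume 0 1)
    {a b : ℝ} (ha : 0 < a) (hab : a < b) (hb : b ≤ 1) :
    (b - a) * ψ a ≤ ∫ t in a..b, ψ t := by
  have hint := integ_sub' ψ hψint ha.le hb hab.le
  have hconst : IntervalIntegrable (fun _ => ψ a) MeasureTheory.volume a b :=
    intervalIntegrable_const
  have h := intervalIntegral.integral_mono_on hab.le hconst hint (fun t htm => by
    exact hψmono.monotoneOn ha (lt_of_lt_of_le ha htm.1) htm.1)
  simpa using h

private lemma sum_update_two' {𝒯 : Type*} [Fintype 𝒯] [DecidableEq 𝒯]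
    (G : 𝒯 → ℝ → ℝ) (x : 𝒯 → ℝ) {i j : 𝒯} (hij : i ≠ j) (a b : ℝ) :
    ∑ τ, G τ (Function.update (Function.update x i a) j b τ)
      = ∑ τ, G τ (x τ) + (G i a - G i (x i)) + (G j b - G j (x j)) := by
  rw [← Finset.sum_compl_add_sum ({i, j} : Finset 𝒯)
      (fun τ => G τ (Function.update (Function.update x i a) j b τ)),
    ← Finset.sum_compl_add_sum ({i, j} : Finset 𝒯) (fun τ => G τ (x τ))]
  have hc : ∀ τ ∈ (({i,j} : Finset 𝒯)ᶜ),
      G τ (Function.update (Function.update x i a) j b τ) = G τ (x τ) := by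
    intro τ hτ
    simp only [Finset.mem_compl, Finset.mem_insert, Finset.mem_singleton, not_or] at hτ
    rw [Function.update_of_ne hτ.2, Function.update_of_ne hτ.1]
  rw [Finset.sum_congr rfl hc, Finset.sum_pair hij, Finset.sum_pair hij]
  rw [Function.update_of_ne hij, Function.update_self, Function.update_self]
  ring


/-- Full-support step: every maximizer π* of
f(π) = Σ_τ π_τ r(τ) − β D(π, π_ref) over the probability simplex Δ(𝒯) satisfies
π*(τ) > 0 for all τ ∈ 𝒯. -/
theorem maximizer_full_support
    {𝒯 : Type*} [Fintype 𝒯] [Nonempty 𝒯]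
    (ψ : ℝ → ℝ)
    (hψcont : ContinuousOn ψ (Set.Ioi (0 : ℝ)))
    (hψmono : StrictMonoOn ψ (Set.Ioi (0 : ℝ)))
    (hψtend : Filter.Tendsto ψ (nhdsWithin 0 (Set.Ioi (0 : ℝ))) Filter.atBot)
    (hψint : IntervalIntegrable ψ MeasureTheory.volume 0 1)
    (H : ℝ → ℝ) (hH : ∀ p : ℝ, 0 ≤ p → H p = ∫ t in (1 : ℝ)..p, ψ t)
    (D : (𝒯 → ℝ) → (𝒯 → ℝ) → ℝ)
    (hD : ∀ x y : 𝒯 → ℝ, D x y = ∑ τ, (H (x τ) - H (y τ) - ψ (y τ) * (x τ - y τ)))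
    (r : 𝒯 → ℝ) (β : ℝ) (hβ : 0 < β)
    (πref : 𝒯 → ℝ) (hrefpos : ∀ τ, 0 < πref τ) (hrefsum : ∑ τ, πref τ = 1)
    (f : (𝒯 → ℝ) → ℝ)
    (hf : ∀ π : 𝒯 → ℝ, f π = ∑ τ, π τ * r τ - β * D π πref)
    (πstar : 𝒯 → ℝ) (hstar_nonneg : ∀ τ, 0 ≤ πstar τ) (hstar_sum : ∑ τ, πstar τ = 1)
    (hmax : ∀ π : 𝒯 → ℝ, (∀ τ, 0 ≤ π τ) → (∑ τ, π τ = 1) → f π ≤ f πstar) :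
    ∀ τ, 0 < πstar τ := by
  classical
  by_contra hcon
  push_neg at hcon
  obtain ⟨τ0, hτ0⟩ := hcon
  have hτ0z : πstar τ0 = 0 := le_antisymm hτ0 (hstar_nonneg τ0)
  have hex : ∃ τ1, 0 < πstar τ1 := by
    by_contra h
    push_neg at h
    have hz : ∀ τ ∈ Finset.univ, πstar τ = 0 :=
      fun τ _ => le_antisymm (h τ) (hstar_nonneg τ)
    rw [Finset.sum_congr rfl hz] at hstar_sum
    simp at hstar_sum
  obtain ⟨τ1, hq⟩ := hex
  set q := πstar τ1 with hqdef
  have hne : τ0 ≠ τ1 := by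
    intro h
    rw [h] at hτ0z
    rw [← hqdef] at hτ0z
    linarith
  have hq1 : q ≤ 1 := by
    rw [← hstar_sum]
    exact Finset.single_le_sum (fun τ _ => hstar_nonneg τ) (Finset.mem_univ τ1)
  -- rewrite f as a sum of per-coordinate functions
  set g : 𝒯 → ℝ → ℝ := fun τ x =>
    x * r τ - β * (H x - H (πref τ) - ψ (πref τ) * (x - πref τ)) with hg
  have hfg : ∀ π : 𝒯 → ℝ, f π = ∑ τ, g τ (π τ) := by
    intro π
    rw [hf, hD, Finset.mul_sum, ← Finset.sum_sub_distrib]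
  -- choose ε
  set C : ℝ := (r τ0 - r τ1) + β * (ψ (πref τ0) - ψ (πref τ1)) + β * ψ (q/2) with hC
  have h1 : ∀ᶠ x in nhdsWithin 0 (Set.Ioi (0:ℝ)), ψ x < C/β :=
    hψtend.eventually (Filter.eventually_lt_atBot _)
  have h2 : ∀ᶠ x in nhdsWithin 0 (Set.Ioi (0:ℝ)), x < q/2 :=
    eventually_nhdsWithin_of_eventually_nhds (eventually_lt_nhds (half_pos hq))
  have h3 : ∀ᶠ x in nhdsWithin 0 (Set.Ioi (0:ℝ)), x ∈ Set.Ioi (0:ℝ) :=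
    eventually_mem_nhdsWithin
  obtain ⟨ε, ⟨hεψ, hεq⟩, hε0⟩ := ((h1.and h2).and h3).exists
  rw [Set.mem_Ioi] at hε0
  have hεq2 : ε < q := by linarith
  have hε1 : ε ≤ 1 := by linarith
  have hqε0 : 0 < q - ε := by linarith
  -- perturbed policy
  set π' : 𝒯 → ℝ := Function.update (Function.update πstar τ0 ε) τ1 (q - ε) with hπ'
  have hπ'nonneg : ∀ τ, 0 ≤ π' τ := by
    intro τ
    rw [hπ']
    by_cases h1 : τ = τ1
    · subst h1; rw [Function.update_self]; linarith
    · rw [Function.update_of_ne h1]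
      by_cases h0 : τ = τ0
      · subst h0; rw [Function.update_self]; linarith
      · rw [Function.update_of_ne h0]; exact hstar_nonneg τ
  have hπ'sum : ∑ τ, π' τ = 1 := by
    have := sum_update_two' (fun _ x => x) πstar hne ε (q - ε)
    rw [hπ', this, hstar_sum, hτ0z, ← hqdef]
    ring
  -- the value difference
  have hval : f π' - f πstar
      = (g τ0 ε - g τ0 0) + (g τ1 (q - ε) - g τ1 q) := by
    rw [hfg, hfg, sum_update_two' g πstar hne ε (q - ε), hτ0z, ← hqdef]
    ring
  -- integral identities
  have hH0 : H ε - H 0 = ∫ t in (0:ℝ)..ε, ψ t := by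
    rw [hH ε hε0.le, hH 0 le_rfl]
    have i1 : IntervalIntegrable ψ MeasureTheory.volume 0 ε :=
      integ_sub' ψ hψint le_rfl hε1 hε0.le
    have i2 : IntervalIntegrable ψ MeasureTheory.volume ε 1 :=
      integ_sub' ψ hψint hε0.le le_rfl hε1
    have := intervalIntegral.integral_add_adjacent_intervals i1 i2
    rw [intervalIntegral.integral_symm 0 1]
    linarith [intervalIntegral.integral_symm ε 1 (f := ψ) (μ := MeasureTheory.volume)]
  have hHq : H (q - ε) - H q = - ∫ t in (q - ε)..q, ψ t := by
    rw [hH (q - ε) hqε0.le, hH q (by linarith)]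
    have i1 : IntervalIntegrable ψ MeasureTheory.volume (q - ε) q :=
      integ_sub' ψ hψint hqε0.le hq1 (by linarith)
    have i2 : IntervalIntegrable ψ MeasureTheory.volume q 1 :=
      integ_sub' ψ hψint hq.le le_rfl hq1
    have i3 : IntervalIntegrable ψ MeasureTheory.volume (q - ε) 1 :=
      integ_sub' ψ hψint hqε0.le le_rfl (by linarith)
    have hadj := intervalIntegral.integral_add_adjacent_intervals i1 i2
    have e1 := intervalIntegral.integral_symm (q - ε) 1 (f := ψ) (μ := MeasureTheory.volume)
    have e2 := intervalIntegral.integral_symm q 1 (f := ψ) (μ := MeasureTheory.volume)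
    linarith
  -- bounds on integrals
  have hI1 : ∫ t in (0:ℝ)..ε, ψ t ≤ ε * ψ ε := by
    have := int_le' ψ hψmono hψint le_rfl hε0 hε1
    simpa using this
  have hI2 : ε * ψ (q - ε) ≤ ∫ t in (q - ε)..q, ψ t := by
    have := int_ge' ψ hψmono hψint hqε0 (by linarith) hq1
    have he : q - (q - ε) = ε := by ring
    rw [he] at this
    exact this
  have hmono2 : ψ (q/2) ≤ ψ (q - ε) :=
    hψmono.monotoneOn (Set.mem_Ioi.2 (half_pos hq)) (Set.mem_Ioi.2 hqε0) (by linarith)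
  -- expand the g differences
  have hg0 : g τ0 ε - g τ0 0
      = ε * r τ0 - β * (∫ t in (0:ℝ)..ε, ψ t) + β * ψ (πref τ0) * ε := by
    rw [hg]
    simp only
    rw [← hH0]
    ring
  have hg1 : g τ1 (q - ε) - g τ1 q
      = - ε * r τ1 + β * (∫ t in (q - ε)..q, ψ t) - β * ψ (πref τ1) * ε := by
    rw [hg]
    simp only
    have : H (q - ε) = H q - ∫ t in (q - ε)..q, ψ t := by linarith [hHq]
    rw [this]
    ring
  have hβψ : β * ψ ε < C := by
    have := (lt_div_iff₀ hβ).mp hεψ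
    linarith
  have hΔ : 0 < f π' - f πstar := by
    rw [hval, hg0, hg1]
    have key : ε * C - ε * (β * ψ ε) ≤
        (ε * r τ0 - β * (∫ t in (0:ℝ)..ε, ψ t) + β * ψ (πref τ0) * ε) +
        (- ε * r τ1 + β * (∫ t in (q - ε)..q, ψ t) - β * ψ (πref τ1) * ε) := by
      have b1 : β * (∫ t in (0:ℝ)..ε, ψ t) ≤ β * (ε * ψ ε) :=
        mul_le_mul_of_nonneg_left hI1 hβ.le
      have b2 : β * (ε * ψ (q/2)) ≤ β * (∫ t in (q - ε)..q, ψ t) := by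
        have : ε * ψ (q/2) ≤ ∫ t in (q - ε)..q, ψ t := by
          calc ε * ψ (q/2) ≤ ε * ψ (q - ε) :=
                mul_le_mul_of_nonneg_left hmono2 hε0.le
            _ ≤ _ := hI2
        exact mul_le_mul_of_nonneg_left this hβ.le
      rw [hC]
      nlinarith
    nlinarith [mul_pos hε0 (sub_pos.2 hβψ)]
  have := hmax π' hπ'nonneg hπ'sum
  linarith
end

section
/- Let ψ : ℝ → ℝ be continuous and strictly monotone increasing on (0, ∞), with ψ(x) → −∞ as x → 0⁺, and interval integrable on [0, 1]. Define H(p) = ∫_1^p ψ(t) dt for p ≥ 0, and for a nonempty finite set 𝒯, D(x, y) = Σ_τ [H(x_τ) − H(y_τ) − ψ(y_τ)(x_τ − y_τ)]. Let r : 𝒯 → ℝ, β > 0, and π_ref : 𝒯 → ℝ with π_ref(τ) > 0 for all τ. Then the objective f(π) = Σ_τ π_τ r(τ) − β D(π, π_ref) is strictly concave on the nonnegative orthant {x : 𝒯 → ℝ | x_τ ≥ 0 for all τ}. -/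
/-!
`H` is a primitive of the strictly increasing `ψ`, hence strictly convex on `[0, ∞)`; continuity
at the endpoint `0`, where `ψ` blows up, comes from the integrability of `ψ` on `[0, 1]`.
The objective is separable, `f π = ∑ τ, φ_τ (π τ)` with `φ_τ t` an affine function of `t` minus
`β H t`, so each `φ_τ` is strictly concave, and a separable sum of strictly concave functions is
strictly concave on the product of their domains.
-/

open Set MeasureTheory

theorem StrictConvexOn.const_mul {𝕜 E : Type*} [Field 𝕜] [LinearOrder 𝕜] [IsStrictOrderedRing 𝕜]
    [AddCommMonoid E] [Module 𝕜 E] {s : Set E} {f : E → 𝕜} (hf : StrictConvexOn 𝕜 s f)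
    {c : 𝕜} (hc : 0 < c) : StrictConvexOn 𝕜 s fun x => c * f x :=
  ⟨hf.1, fun x hx y hy hxy a b ha hb hab => by
    calc c * f (a • x + b • y) < c * (a • f x + b • f y) :=
          mul_lt_mul_of_pos_left (hf.2 hx hy hxy ha hb hab) hc
      _ = a • (c * f x) + b • (c * f y) := by simp only [smul_eq_mul]; ring⟩

theorem strictConcaveOn_sum_apply {ι : Type*} [Fintype ι] {s : ι → Set ℝ} {g : ι → ℝ → ℝ}
    (hg : ∀ i, StrictConcaveOn ℝ (s i) (g i)) :
    StrictConcaveOn ℝ {x : ι → ℝ | ∀ i, x i ∈ s i} fun x => ∑ i, g i (x i) := by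
  refine ⟨fun x hx y hy a b ha hb hab i => (hg i).1 (hx i) (hy i) ha hb hab, ?_⟩
  intro x hx y hy hxy a b ha hb hab
  obtain ⟨i₀, hi₀⟩ := Function.ne_iff.mp hxy
  simp only [Pi.add_apply, Pi.smul_apply, smul_eq_mul, Finset.mul_sum, ← Finset.sum_add_distrib]
  exact Finset.sum_lt_sum (fun i _ => (hg i).concaveOn.2 (hx i) (hy i) ha.le hb.le hab)
    ⟨i₀, Finset.mem_univ _, (hg i₀).2 (hx i₀) (hy i₀) hi₀ ha hb hab⟩

theorem hasDerivAt_intervalIntegral_of_continuousOn {ψ : ℝ → ℝ} {U : Set ℝ} (hU : IsOpen U)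
    (hψ : ContinuousOn ψ U) {a p : ℝ} (hsub : uIcc a p ⊆ U) :
    HasDerivAt (fun q => ∫ t in a..q, ψ t) (ψ p) p :=
  intervalIntegral.integral_hasDerivAt_right (hψ.mono hsub).intervalIntegrable
    (hψ.stronglyMeasurableAtFilter hU p (hsub right_mem_uIcc))
    (hψ.continuousAt (hU.mem_nhds (hsub right_mem_uIcc)))

theorem strictConvexOn_Ici_intervalIntegral {ψ : ℝ → ℝ} (hcont : ContinuousOn ψ (Ioi 0))
    (hmono : StrictMonoOn ψ (Ioi 0)) {a : ℝ} (ha : 0 < a) (hint : IntervalIntegrable ψ volume 0 a) :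
    StrictConvexOn ℝ (Ici 0) fun p => ∫ t in a..p, ψ t := by
  have hderiv : ∀ p ∈ Ioi (0 : ℝ), HasDerivAt (fun q => ∫ t in a..q, ψ t) (ψ p) p :=
    fun p hp => hasDerivAt_intervalIntegral_of_continuousOn isOpen_Ioi hcont
      fun t ht => (lt_min ha hp).trans_le ht.1
  have hcont' : ContinuousOn (fun p => ∫ t in a..p, ψ t) (Ici 0) := by
    intro p hp
    rcases (mem_Ici.mp hp).eq_or_lt with rfl | hp
    · have hprim := intervalIntegral.continuousOn_primitive_interval' hint right_mem_uIcc
      rw [uIcc_of_le ha.le] at hprim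
      exact (hprim 0 (left_mem_Icc.2 ha.le)).mono_of_mem_nhdsWithin (Icc_mem_nhdsGE ha)
    · exact (hderiv p hp).continuousAt.continuousWithinAt
  refine StrictMonoOn.strictConvexOn_of_deriv (convex_Ici 0) hcont' ?_
  rw [interior_Ici]
  exact hmono.congr fun p hp => ((hderiv p hp).deriv).symm

theorem objective_strictConcaveOn_orthant_general
    {𝒯 : Type*} [Fintype 𝒯]
    (ψ : ℝ → ℝ)
    (hψcont : ContinuousOn ψ (Set.Ioi (0 : ℝ)))
    (hψmono : StrictMonoOn ψ (Set.Ioi (0 : ℝ)))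
    (hψint : IntervalIntegrable ψ MeasureTheory.volume 0 1)
    (H : ℝ → ℝ) (hH : ∀ p : ℝ, 0 ≤ p → H p = ∫ t in (1 : ℝ)..p, ψ t)
    (D : (𝒯 → ℝ) → (𝒯 → ℝ) → ℝ)
    (hD : ∀ x y : 𝒯 → ℝ, D x y = ∑ τ, (H (x τ) - H (y τ) - ψ (y τ) * (x τ - y τ)))
    (r : 𝒯 → ℝ) (β : ℝ) (hβ : 0 < β)
    (πref : 𝒯 → ℝ)
    (f : (𝒯 → ℝ) → ℝ)
    (hf : ∀ π : 𝒯 → ℝ, f π = ∑ τ, π τ * r τ - β * D π πref) :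
    StrictConcaveOn ℝ {x : 𝒯 → ℝ | ∀ τ, 0 ≤ x τ} f := by
  have hHconv : StrictConvexOn ℝ (Ici 0) H :=
    (strictConvexOn_Ici_intervalIntegral hψcont hψmono one_pos hψint).congr
      fun p hp => (hH p hp).symm
  have hterm : ∀ τ, StrictConcaveOn ℝ (Ici 0) fun t =>
      t * r τ - β * (H t - H (πref τ) - ψ (πref τ) * (t - πref τ)) := fun τ =>
    ((((LinearMap.mul ℝ ℝ (r τ + β * ψ (πref τ))).concaveOn (convex_Ici 0)).add_const
      (β * H (πref τ) - β * ψ (πref τ) * πref τ)).sub_strictConvexOn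
      (hHconv.const_mul hβ)).congr fun t _ => by simp only [Pi.sub_apply, Pi.add_apply, LinearMap.mul_apply']; ring
  refine (strictConcaveOn_sum_apply hterm).congr fun π _ => ?_
  rw [hf, hD, Finset.mul_sum, ← Finset.sum_sub_distrib]

/-- The regularized preference-optimization objective
f(π) = Σ_τ π_τ r(τ) − β D(π, π_ref), where D is the Bregman divergence induced by the
mirror map built from ψ, is strictly concave on the nonnegative orthant. -/
theorem objective_strictConcaveOn_orthant
    {𝒯 : Type*} [Fintype 𝒯] [Nonempty 𝒯]
    (ψ : ℝ → ℝ)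
    (hψcont : ContinuousOn ψ (Set.Ioi (0 : ℝ)))
    (hψmono : StrictMonoOn ψ (Set.Ioi (0 : ℝ)))
    (hψtend : Filter.Tendsto ψ (nhdsWithin 0 (Set.Ioi (0 : ℝ))) Filter.atBot)
    (hψint : IntervalIntegrable ψ MeasureTheory.volume 0 1)
    (H : ℝ → ℝ) (hH : ∀ p : ℝ, 0 ≤ p → H p = ∫ t in (1 : ℝ)..p, ψ t)
    (D : (𝒯 → ℝ) → (𝒯 → ℝ) → ℝ)
    (hD : ∀ x y : 𝒯 → ℝ, D x y = ∑ τ, (H (x τ) - H (y τ) - ψ (y τ) * (x τ - y τ)))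
    (r : 𝒯 → ℝ) (β : ℝ) (hβ : 0 < β)
    (πref : 𝒯 → ℝ) (hrefpos : ∀ τ, 0 < πref τ)
    (f : (𝒯 → ℝ) → ℝ)
    (hf : ∀ π : 𝒯 → ℝ, f π = ∑ τ, π τ * r τ - β * D π πref) :
    StrictConcaveOn ℝ {x : 𝒯 → ℝ | ∀ τ, 0 ≤ x τ} f :=
  objective_strictConcaveOn_orthant_general ψ hψcont hψmono hψint H hH D hD r β hβ πref f hf
end
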